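/- Let G be a locally compact Hausdorff topological group and X a Tychonoff G-space. If X is a proper G-space in the sense of Palais, then the orbit space X/G is a Tychonoff (completely regular Hausdorff) space. -/

import Mathlib

/-- A subset `S` of a `G`-space `X` is small (in the sense of Palais). -/
def IsSmallSet (G : Type*) {X : Type*} [SMul G X] [TopologicalSpace G] [TopologicalSpace X]
    (S : Set X) : Prop :=
  ∀ x : X, ∃ V ∈ nhds x, IsCompact (closure {g : G | ∃ s ∈ S, g • s ∈ V})

/-- A `G`-space `X` is proper in the sense of Palais: it has an open cover consisting of
small sets. -/
def PalaisProper (G X : Type*) [SMul G X] [TopologicalSpace G] [TopologicalSpace X] : Prop :=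
  ∃ 𝒰 : Set (Set X), (∀ U ∈ 𝒰, IsOpen U) ∧ ⋃₀ 𝒰 = Set.univ ∧ ∀ U ∈ 𝒰, IsSmallSet G U

/-!
Replace a separating function `h : X → [0, 1]` by its orbit infimum `z ↦ ⨅ g, h (g • z)`, which
is `G`-invariant and hence descends to `X/G`. Choosing `h ≡ 1` outside a small open set `U`
around the point to be separated, near any given point the infimum only involves the
relatively compact set of `g` that can move that point into `U`, so it is continuous.
The same compactness makes orbits closed, so points of `X/G` are closed.
-/

open Set Filter Topology MulAction unitInterval

theorem iInf_smul_smul {G X α : Type*} [Group G] [MulAction G X] [InfSet α] (h : X → α)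
    (g₀ : G) (z : X) : ⨅ g : G, h (g • g₀ • z) = ⨅ g : G, h (g • z) := by
  simp_rw [smul_smul]
  exact (Equiv.mulRight g₀).iInf_comp (g := fun g => h (g • z))

section Palais

variable {G X : Type*} [Group G] [TopologicalSpace G] [TopologicalSpace X] [MulAction G X]

theorem IsSmallSet.mono {S T : Set X} (hT : IsSmallSet G T) (hST : S ⊆ T) : IsSmallSet G S :=
  fun x => (hT x).imp fun _ ⟨hV, hC⟩ =>
    ⟨hV, hC.of_isClosed_subset isClosed_closure
      (closure_mono fun _ ⟨s, hs, hgs⟩ => ⟨s, hST hs, hgs⟩)⟩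

theorem PalaisProper.exists_isOpen_isSmallSet (hX : PalaisProper G X) (x : X) :
    ∃ U, IsOpen U ∧ x ∈ U ∧ IsSmallSet G U := by
  obtain ⟨𝒰, hopen, hcover, hsmall⟩ := hX
  obtain ⟨U, hU, hxU⟩ := mem_sUnion.mp (hcover ▸ mem_univ x)
  exact ⟨U, hopen U hU, hxU, hsmall U hU⟩

theorem IsSmallSet.isClosed_orbit [ContinuousSMul G X] [T2Space X] {x : X}
    (hx : IsSmallSet G {x}) : IsClosed (orbit G x) := by
  refine isClosed_of_closure_subset fun y hy => ?_
  obtain ⟨V, hV, hC⟩ := hx y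
  have hsub : orbit G x ∩ V ⊆ (· • x) '' closure {g : G | ∃ s ∈ ({x} : Set X), g • s ∈ V} := by
    rintro _ ⟨⟨g, rfl⟩, hgV⟩
    exact ⟨g, subset_closure ⟨x, rfl, hgV⟩, rfl⟩
  have hy' : y ∈ closure (orbit G x ∩ V) := mem_closure_iff_nhds.mpr fun t ht => by
    rw [inter_comm _ V, ← inter_assoc]
    exact mem_closure_iff_nhds.mp hy (t ∩ V) (inter_mem ht hV)
  have hK : IsClosed ((· • x) '' closure {g : G | ∃ s ∈ ({x} : Set X), g • s ∈ V}) :=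
    (hC.image (continuous_id.smul continuous_const)).isClosed
  obtain ⟨g, -, hg⟩ := hK.closure_subset_iff.mpr hsub hy'
  exact ⟨g, hg⟩

theorem IsSmallSet.continuous_iInf_smul [IsTopologicalGroup G] [ContinuousSMul G X]
    {α : Type*} [CompleteLinearOrder α] [TopologicalSpace α] [OrderTopology α]
    {U : Set X} (hU : IsSmallSet G U) {h : X → α} (hh : Continuous h) (htop : ∀ z ∉ U, h z = ⊤) :
    Continuous fun z => ⨅ g : G, h (g • z) := by
  refine continuous_iff_continuousAt.mpr fun y => ?_
  obtain ⟨V, hV, hC⟩ := hU y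
  set D : Set G := (closure {g : G | ∃ s ∈ U, g • s ∈ V})⁻¹
  have hD : Continuous fun z => sInf ((fun g : G => h (g • z)) '' D) :=
    hC.inv.continuous_sInf (f := fun (z : X) (g : G) => h (g • z))
      (hh.comp (continuous_snd.smul continuous_fst))
  -- Near `y`, only the `g` with `g • z ∈ U` matter, and these lie in the compact set `D`.
  have hlocal : ∀ z ∈ V, ⨅ g : G, h (g • z) = sInf ((fun g : G => h (g • z)) '' D) := by
    intro z hz
    rw [sInf_image]
    refine le_antisymm (le_iInf₂ fun g _ => iInf_le _ g) (le_iInf fun g => ?_)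
    by_cases hgz : g • z ∈ U
    · have hgD : g ∈ D := subset_closure (⟨g • z, hgz, by rwa [inv_smul_smul]⟩ :
        g⁻¹ ∈ {g : G | ∃ s ∈ U, g • s ∈ V})
      exact iInf₂_le (f := fun g (_ : g ∈ D) => h (g • z)) g hgD
    · rw [htop _ hgz]
      exact le_top
  exact hD.continuousAt.congr (eventuallyEq_of_mem hV hlocal).symm

theorem PalaisProper.exists_invariant_separating_function [IsTopologicalGroup G]
    [ContinuousSMul G X] [CompletelyRegularSpace X] (hX : PalaisProper G X) {x : X} {A : Set X}
    (hA : IsClosed A) (hAinv : ∀ (g : G), ∀ a ∈ A, g • a ∈ A) (hxA : x ∉ A) :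
    ∃ f : X → I, Continuous f ∧ (∀ (g : G) z, f (g • z) = f z) ∧ f x = 0 ∧ EqOn f 1 A := by
  obtain ⟨U, hUo, hxU, hU⟩ := hX.exists_isOpen_isSmallSet x
  obtain ⟨h, hh, hx, hAU⟩ := CompletelyRegularSpace.completely_regular x (A ∪ Uᶜ)
    (hA.union hUo.isClosed_compl) (by simp [hxA, hxU])
  refine ⟨fun z => ⨅ g : G, h (g • z), hU.continuous_iInf_smul hh fun z hz => hAU (Or.inr hz),
    fun g z => iInf_smul_smul h g z, ?_, fun a ha => ?_⟩
  · exact le_antisymm ((iInf_le _ 1).trans_eq (by rw [one_smul, hx])) nonneg'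
  · exact iInf_eq_top.mpr fun g => hAU (Or.inl (hAinv g a ha))

theorem PalaisProper.t1Space_quotient [ContinuousSMul G X] [T2Space X] (hX : PalaisProper G X) :
    T1Space (Quotient (orbitRel G X)) := by
  refine ⟨Quotient.ind fun x => ?_⟩
  obtain ⟨U, -, hxU, hU⟩ := hX.exists_isOpen_isSmallSet x
  rw [← isQuotientMap_quotient_mk'.isClosed_preimage]
  convert (hU.mono (singleton_subset_iff.mpr hxU)).isClosed_orbit using 1
  ext y
  exact Quotient.eq.trans orbitRel_apply

theorem PalaisProper.completelyRegularSpace_quotient [IsTopologicalGroup G] [ContinuousSMul G X]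
    [CompletelyRegularSpace X] (hX : PalaisProper G X) :
    CompletelyRegularSpace (Quotient (orbitRel G X)) := by
  refine ⟨Quotient.ind fun x K hK hxK => ?_⟩
  obtain ⟨f, hf, hinv, hx, hK1⟩ := hX.exists_invariant_separating_function
    (A := Quotient.mk _ ⁻¹' K) (hK.preimage continuous_quotient_mk') (fun g a ha => by
      rwa [mem_preimage, Quotient.sound (orbitRel_apply.mpr (mem_orbit a g))]) hxK
  refine ⟨Quotient.lift f ?_, hf.quotient_lift _, hx, Quotient.ind fun a ha => hK1 ha⟩
  rintro a b ⟨g, rfl⟩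
  exact hinv g b

end Palais

theorem statement5_general {G X : Type*} [Group G] [TopologicalSpace G] [IsTopologicalGroup G]
    [TopologicalSpace X] [MulAction G X] [ContinuousSMul G X] [T35Space X]
    (hX : PalaisProper G X) :
    T35Space (Quotient (MulAction.orbitRel G X)) :=
  { toT0Space := haveI := hX.t1Space_quotient; inferInstance
    toCompletelyRegularSpace := hX.completelyRegularSpace_quotient }

/-- If `G` is a locally compact Hausdorff group and `X` a Tychonoff `G`-space
which is proper in the sense of Palais, then the orbit space `X/G` is Tychonoff. -/
theorem statement5 {G X : Type*} [Group G] [TopologicalSpace G] [IsTopologicalGroup G]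
    [LocallyCompactSpace G] [T2Space G]
    [TopologicalSpace X] [MulAction G X] [ContinuousSMul G X] [T35Space X]
    (hX : PalaisProper G X) :
    T35Space (Quotient (MulAction.orbitRel G X)) :=
  statement5_general hX
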